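/- Let D = ⟨R, C, ∅⟩ be a defeasible theory with ≺ = ∅ and R_u = ∅, and let ⟨T, F⟩ be the well-founded model of D according to ADL. Then for every α-stable set M of D: T ⊆ M and F ∩ α_D(M) = ∅. -/

import Mathlib

namespace DLWFS

universe u

/-- Ground literals over a type `A` of atoms: atoms and their classical complements. -/
inductive Lit (A : Type u) : Type u where
  | pos : A → Lit A
  | neg : A → Lit A

/-- The classical complement `p̄` of a literal `p`. -/
def Lit.compl {A : Type u} : Lit A → Lit A
  | .pos a => .neg a
  | .neg a => .pos a

/-- The three kinds of rules of a defeasible theory. -/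
inductive RuleKind : Type where
  | strict
  | defeasible
  | defeater
deriving DecidableEq

/-- A rule of a defeasible theory: a kind, a body (a set of literals) and a head literal. -/
structure DRule (A : Type u) where
  kind : RuleKind
  body : Set (Lit A)
  head : Lit A

/-- A defeasible theory `D = ⟨R, C, ≺⟩`. -/
structure DTheory (A : Type u) where
  rules : Set (DRule A)
  conflicts : Set (Set (Lit A))
  prec : DRule A → DRule A → Prop

namespace DTheory

variable {A : Type u}

/-- The strict rules `R_s`. -/
def Rs (D : DTheory A) : Set (DRule A) := {r ∈ D.rules | r.kind = RuleKind.strict}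

/-- The defeasible rules `R_d`. -/
def Rd (D : DTheory A) : Set (DRule A) := {r ∈ D.rules | r.kind = RuleKind.defeasible}

/-- The defeater rules `R_u`. -/
def Ru (D : DTheory A) : Set (DRule A) := {r ∈ D.rules | r.kind = RuleKind.defeater}

/-- `C[p]`: the conflict sets containing literal `p`. -/
def Cset (D : DTheory A) (p : Lit A) : Set (Set (Lit A)) := {c ∈ D.conflicts | p ∈ c}

/-- Structural conditions in the definition of a defeasible theory: a countable set of
rules with finite bodies, a countable set of finite conflict sets containing every
minimal conflict set `{p, ¬p}`, and an acyclic priority relation over non-strict rules. -/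
def WellFormed (D : DTheory A) : Prop :=
  D.rules.Countable ∧ D.conflicts.Countable ∧
  (∀ r ∈ D.rules, r.body.Finite) ∧
  (∀ c ∈ D.conflicts, c.Finite) ∧
  (∀ p : A, ({Lit.pos p, Lit.neg p} : Set (Lit A)) ∈ D.conflicts) ∧
  (∀ r s, D.prec r s → r.kind ≠ RuleKind.strict ∧ s.kind ≠ RuleKind.strict) ∧
  (∀ r, ¬ Relation.TransGen D.prec r r)

/-- `C = C_MIN`: the conflict sets are exactly the minimal ones `{p, ¬p}`. -/
def MinimalConflicts (D : DTheory A) : Prop :=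
  D.conflicts = {c | ∃ p : A, c = ({Lit.pos p, Lit.neg p} : Set (Lit A))}

end DTheory

/-- A 3-valued interpretation: a pair `⟨T, F⟩` of sets. -/
abbrev Interp (L : Type u) : Type u := Set L × Set L

variable {A : Type u}

/-- `S` is ADL-unfounded with respect to theory `D` and interpretation `I = ⟨T, F⟩`. -/
def ADLUnfounded (D : DTheory A) (I : Interp (Lit A)) (S : Set (Lit A)) : Prop :=
  ∀ p ∈ S,
    (∀ r ∈ D.Rs, r.head = p → (r.body ∩ (I.2 ∪ S)).Nonempty) ∧
    (∀ r ∈ D.Rd, r.head = p →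
      (r.body ∩ (I.2 ∪ S)).Nonempty ∨
      ∃ c ∈ D.conflicts, p ∈ c ∧
        ∀ q ∈ c \ {p}, ∃ s ∈ D.rules, s.head = q ∧ s.body ⊆ I.1 ∧
          (D.prec r s ∨ s.kind = RuleKind.strict))

/-- `S` is NDL-unfounded with respect to theory `D` and interpretation `I = ⟨T, F⟩`. -/
def NDLUnfounded (D : DTheory A) (I : Interp (Lit A)) (S : Set (Lit A)) : Prop :=
  ∀ p ∈ S,
    (∀ r ∈ D.Rs, r.head = p → (r.body ∩ (I.2 ∪ S)).Nonempty) ∧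
    (∀ r ∈ D.Rd, r.head = p →
      (r.body ∩ (I.2 ∪ S)).Nonempty ∨
      ∃ c ∈ D.conflicts, p ∈ c ∧
        ∀ q ∈ c \ {p}, ∃ s ∈ D.rules, s.head = q ∧ s.body ⊆ I.1 ∧
          ¬ D.prec s r)

/-- `U_D(I)` for ADL: the union of all ADL-unfounded sets. -/
def UA (D : DTheory A) (I : Interp (Lit A)) : Set (Lit A) :=
  ⋃₀ {S | ADLUnfounded D I S}

/-- `U_D(I)` for NDL: the union of all NDL-unfounded sets. -/
def UN (D : DTheory A) (I : Interp (Lit A)) : Set (Lit A) :=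
  ⋃₀ {S | NDLUnfounded D I S}

/-- `T_D(I)`: the literals having a witness of provability with respect to `I = ⟨T, F⟩`. -/
def TD (D : DTheory A) (I : Interp (Lit A)) : Set (Lit A) :=
  {p | ∃ r ∈ D.rules, r.head = p ∧ r.body ⊆ I.1 ∧
    (r.kind = RuleKind.strict ∨
      (r.kind = RuleKind.defeasible ∧
        ∀ c ∈ D.conflicts, p ∈ c →
          ∃ q ∈ c \ {p}, ∀ s ∈ D.rules, s.head = q →
            (D.prec s r ∨ (s.body ∩ I.2).Nonempty)))}

/-- `W_D` for ADL. -/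
def WA (D : DTheory A) (I : Interp (Lit A)) : Interp (Lit A) := (TD D I, UA D I)

/-- `W_D` for NDL. -/
def WN (D : DTheory A) (I : Interp (Lit A)) : Interp (Lit A) := (TD D I, UN D I)

/-- `I` is the well-founded model for the operator `W`: the least fixpoint of `W`
(componentwise order). -/
def IsWFModel {L : Type u} (W : Interp L → Interp L) (I : Interp L) : Prop :=
  W I = I ∧ ∀ J, W J = J → I.1 ⊆ J.1 ∧ I.2 ⊆ J.2

/-- A rule of a normal logic program: `head ← pos, ∼neg`. -/
structure NRule (A : Type u) where
  head : A
  pos : Set A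
  neg : Set A

/-- A normal logic program: a set of rules. -/
abbrev NProgram (A : Type u) : Type u := Set (NRule A)

/-- Structural conditions in the definition of a normal logic program: a countable
set of ground rules with finite bodies. -/
def NProgram.WellFormed (P : NProgram A) : Prop :=
  P.Countable ∧ ∀ r ∈ P, r.pos.Finite ∧ r.neg.Finite

/-- The immediate consequence operator `T_Π` on 3-valued interpretations. -/
def TP (P : NProgram A) (I : Interp A) : Set A :=
  {a | ∃ r ∈ P, r.head = a ∧ r.pos ⊆ I.1 ∧ r.neg ⊆ I.2}

/-- `S` is an unfounded set of program `P` with respect to interpretation `I = ⟨T, F⟩`. -/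
def PUnfounded (P : NProgram A) (I : Interp A) (S : Set A) : Prop :=
  ∀ p ∈ S, ∀ r ∈ P, r.head = p →
    (r.pos ∩ (I.2 ∪ S)).Nonempty ∨ (r.neg ∩ I.1).Nonempty

/-- `U_Π(I)`: the greatest unfounded set (union of all unfounded sets). -/
def UP (P : NProgram A) (I : Interp A) : Set A :=
  ⋃₀ {S | PUnfounded P I S}

/-- `W_Π(I) = ⟨T_Π(I), U_Π(I)⟩`. -/
def WP (P : NProgram A) (I : Interp A) : Interp A := (TP P I, UP P I)

/-- Transfinite iteration of an operator `W` from `⊥`, taking suprema at limit ordinals. -/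
noncomputable def iterW {α : Type*} [CompleteLattice α] (W : α → α) : Ordinal.{0} → α :=
  fun o =>
    Ordinal.limitRecOn (motive := fun _ => α) o ⊥ (fun _ ih => W ih)
      (fun o' _ ih => ⨆ x : Set.Iio o', ih x.1 x.2)

/-- One step of the immediate consequence operator for a set of defeasible-theory rules. -/
def TRstep (R : Set (DRule A)) (S : Set (Lit A)) : Set (Lit A) :=
  {p | ∃ r ∈ R, r.head = p ∧ r.body ⊆ S}

/-- The finite iterates `T_R ↑ n`. -/
def TRiter (R : Set (DRule A)) : ℕ → Set (Lit A)
  | 0 => ∅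
  | n + 1 => TRstep R (TRiter R n)

/-- `Cl(R) = T_R ↑ ω`. -/
def ClR (R : Set (DRule A)) : Set (Lit A) := ⋃ n, TRiter R n

/-- The `α`-reduct `D_α^S` of a defeasible theory. -/
def alphaReduct (D : DTheory A) (S : Set (Lit A)) : Set (DRule A) :=
  D.Rs ∪ {r ∈ D.Rd | ∀ c ∈ D.conflicts, r.head ∈ c → ∃ q ∈ c \ {r.head}, q ∉ S}

/-- The ambiguity-propagating operator `α_D(S) = Cl(D_α^S)`. -/
def alphaOp (D : DTheory A) (S : Set (Lit A)) : Set (Lit A) := ClR (alphaReduct D S)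

/-- The `β`-reduct `D_β^S` of a defeasible theory. -/
def betaReduct (D : DTheory A) (S : Set (Lit A)) : Set (DRule A) :=
  D.Rs ∪ {r ∈ D.Rd | ∀ c ∈ D.conflicts, r.head ∈ c →
    ∃ q ∈ c \ {r.head}, ∀ s ∈ D.rules, s.head = q → (¬ s.body ⊆ S ∨ D.prec s r)}

/-- The ambiguity-blocking operator `β_D(S) = Cl(D_β^S)`. -/
def betaOp (D : DTheory A) (S : Set (Lit A)) : Set (Lit A) := ClR (betaReduct D S)

/-- `S` is an `α`-stable set of `D`. -/
def AlphaStable (D : DTheory A) (S : Set (Lit A)) : Prop := alphaOp D S = S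

/-- `S` is a `β`-stable set of `D`. -/
def BetaStable (D : DTheory A) (S : Set (Lit A)) : Prop := betaOp D S = S

/-- The sequence `X_D↑λ`: `X↑0 = ∅`, `X↑(λ+1) = β_D(β_D(X↑λ))`, unions at limits. -/
noncomputable def Xseq (D : DTheory A) : Ordinal.{0} → Set (Lit A) :=
  iterW (fun S => betaOp D (betaOp D S))

/-- The Gelfond–Lifschitz reduct `Π^S`. -/
def glReduct (P : NProgram A) (S : Set A) : NProgram A :=
  {r' | ∃ r ∈ P, r.neg ∩ S = ∅ ∧ r' = NRule.mk r.head r.pos ∅}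

/-- One step of the immediate consequence operator for a NAF-free program. -/
def TPstep (P : NProgram A) (S : Set A) : Set A :=
  {a | ∃ r ∈ P, r.head = a ∧ r.pos ⊆ S}

/-- The finite iterates `T_Π ↑ n` of a NAF-free program. -/
def TPiter (P : NProgram A) : ℕ → Set A
  | 0 => ∅
  | n + 1 => TPstep P (TPiter P n)

/-- `Cl(Π) = T_Π ↑ ω`. -/
def ClP (P : NProgram A) : Set A := ⋃ n, TPiter P n

/-- The Gelfond–Lifschitz operator `γ_Π(S) = Cl(Π^S)`. -/
def gamma (P : NProgram A) (S : Set A) : Set A := ClP (glReduct P S)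

/-- `S` is a stable model of `P`. -/
def StableModel (P : NProgram A) (S : Set A) : Prop := gamma P S = S

/-- `Prod(C[p])`: all sets obtained by choosing one literal other than `p` from each
conflict set containing `p`. -/
def ProdC (D : DTheory A) (p : Lit A) : Set (Set (Lit A)) :=
  {Q | ∃ f : Set (Lit A) → Lit A,
    (∀ c ∈ D.conflicts, p ∈ c → f c ∈ c \ {p}) ∧
    Q = f '' {c ∈ D.conflicts | p ∈ c}}

/-- The logic program translation `Π_D` of a defeasible theory `D` (negative literals
are treated as fresh atoms, so the atoms of the program are the literals of `D`). -/
def lpTrans (D : DTheory A) : NProgram (Lit A) :=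
  {r' | ∃ r ∈ D.Rs, r' = NRule.mk r.head r.body ∅} ∪
  {r' | ∃ r ∈ D.Rd, ∃ Q ∈ ProdC D r.head, r' = NRule.mk r.head r.body Q}

/-- The explicit version `Φ` of a normal program `Π`: atoms of `Φ` are the literals
over the atoms of `Π` (`¬p` being a fresh atom). -/
def explicitVer (P : NProgram A) : NProgram (Lit A) :=
  {r' | ∃ r ∈ P, r' = NRule.mk (Lit.pos r.head) (Lit.pos '' r.pos ∪ Lit.neg '' r.neg) ∅} ∪
  {r' | ∃ p : A, r' = NRule.mk (Lit.neg p) ∅ {Lit.pos p}}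

/-- The minimal conflict sets over atom type `A`. -/
def CMin (A : Type u) : Set (Set (Lit A)) :=
  {c | ∃ p : A, c = ({Lit.pos p, Lit.neg p} : Set (Lit A))}

/-- The defeasible theory translation `D_Π` of a normal program `Π`: each program rule
becomes a strict rule (default literals `∼b` becoming negative literals `¬b`), and each
atom `p` yields a presumption `∅ ⇒ ¬p`; conflict sets are minimal and `≺` is empty. -/
def dtTrans (P : NProgram A) : DTheory A :=
  { rules :=
      {e | ∃ r ∈ P, e = DRule.mk RuleKind.strict
            (Lit.pos '' r.pos ∪ Lit.neg '' r.neg) (Lit.pos r.head)} ∪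
      {e | ∃ p : A, e = DRule.mk RuleKind.defeasible ∅ (Lit.neg p)}
    conflicts := CMin A
    prec := fun _ _ => False }

/-- `M^¬ = M ∪ {¬p : p ∉ M}`, atoms being identified with positive literals. -/
def negCompl (M : Set A) : Set (Lit A) :=
  Lit.pos '' M ∪ Lit.neg '' {p | p ∉ M}

end DLWFS

/-! For an α-stable `M`, the interpretation `(M, Mᶜ)` is a pre-fixpoint of the monotone operator
`W_D`: literals with a witness of provability wrt `(M, Mᶜ)` are derivable in the α-reduct
`D_α^M`, hence lie in `Cl(D_α^M) = M`, and no literal of `M` can belong to a set unfounded wrt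
`(M, Mᶜ)`, by induction along the stages of `Cl(D_α^M)`. The well-founded model, being the least
fixpoint, lies below every pre-fixpoint, so `T ⊆ M` and `F ⊆ Mᶜ`, while `α_D(M) = M`. -/

namespace DLWFS

section Development

variable {A : Type*}

section Closure

variable {R : Set (DRule A)}

lemma TRstep_mono (R : Set (DRule A)) : Monotone (TRstep R) :=
  fun _ _ hST _ ⟨r, hr, hhead, hbody⟩ => ⟨r, hr, hhead, hbody.trans hST⟩

lemma TRiter_mono (R : Set (DRule A)) : Monotone (TRiter R) := by
  refine monotone_nat_of_le_succ fun n => ?_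
  induction n with
  | zero => exact Set.empty_subset _
  | succ n ih => exact TRstep_mono R ih

lemma TRiter_subset_ClR (R : Set (DRule A)) (n : ℕ) : TRiter R n ⊆ ClR R :=
  Set.subset_iUnion (TRiter R) n

lemma head_mem_ClR {r : DRule A} (hr : r ∈ R) (hfin : r.body.Finite)
    (hbody : r.body ⊆ ClR R) : r.head ∈ ClR R := by
  obtain ⟨n, hn⟩ := (TRiter_mono R).directed_le.exists_mem_subset_of_finset_subset_biUnion
    (s := hfin.toFinset) (by simpa [ClR] using hbody)
  exact TRiter_subset_ClR R (n + 1) ⟨r, hr, rfl, by simpa using hn⟩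

lemma exists_rule_of_mem_ClR {p : Lit A} (hp : p ∈ ClR R) :
    ∃ r ∈ R, r.head = p ∧ r.body ⊆ ClR R := by
  obtain ⟨n, hn⟩ := Set.mem_iUnion.mp hp
  cases n with
  | zero => exact absurd hn (Set.notMem_empty p)
  | succ n =>
    obtain ⟨r, hr, hhead, hbody⟩ := hn
    exact ⟨r, hr, hhead, hbody.trans (TRiter_subset_ClR R n)⟩

lemma disjoint_ClR {S : Set (Lit A)}
    (hS : ∀ r ∈ R, r.head ∈ S → r.body ⊆ ClR R → (r.body ∩ S).Nonempty) :
    Disjoint (ClR R) S := by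
  suffices ∀ n, Disjoint (TRiter R n) S from Set.disjoint_iUnion_left.mpr this
  intro n
  induction n with
  | zero => exact Set.empty_disjoint S
  | succ n ih =>
    refine Set.disjoint_left.mpr ?_
    rintro _ ⟨r, hr, rfl, hbody⟩ hhead
    obtain ⟨q, hqbody, hqS⟩ := hS r hr hhead (hbody.trans (TRiter_subset_ClR R n))
    exact Set.disjoint_left.mp ih (hbody hqbody) hqS

end Closure

section Monotonicity

variable (D : DTheory A)

lemma TD_mono : Monotone (TD D) := by
  rintro I J hIJ p ⟨r, hr, hhead, hbody, hkind⟩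
  refine ⟨r, hr, hhead, hbody.trans hIJ.1, hkind.imp_right fun ⟨hdef, hdefeat⟩ => ⟨hdef, ?_⟩⟩
  intro c hc hpc
  obtain ⟨q, hq, hblocked⟩ := hdefeat c hc hpc
  exact ⟨q, hq, fun s hs hshead => (hblocked s hs hshead).imp_right
    (Set.Nonempty.mono (Set.inter_subset_inter_right _ hIJ.2))⟩

lemma ADLUnfounded.mono {D : DTheory A} {I J : Interp (Lit A)} {S : Set (Lit A)} (hIJ : I ≤ J)
    (hS : ADLUnfounded D I S) : ADLUnfounded D J S := by
  have hF : I.2 ∪ S ⊆ J.2 ∪ S := Set.union_subset_union_left S hIJ.2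
  intro p hp
  obtain ⟨hstrict, hdef⟩ := hS p hp
  refine ⟨fun r hr hhead => (hstrict r hr hhead).mono (Set.inter_subset_inter_right _ hF),
    fun r hr hhead => ?_⟩
  refine (hdef r hr hhead).imp (Set.Nonempty.mono (Set.inter_subset_inter_right _ hF)) ?_
  rintro ⟨c, hc, hpc, hattack⟩
  refine ⟨c, hc, hpc, fun q hq => ?_⟩
  obtain ⟨s, hs, hshead, hsbody, hstronger⟩ := hattack q hq
  exact ⟨s, hs, hshead, hsbody.trans hIJ.1, hstronger⟩

lemma UA_mono : Monotone (UA D) :=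
  fun _ _ hIJ => Set.sUnion_mono fun _ hS => ADLUnfounded.mono hIJ hS

lemma WA_mono : Monotone (WA D) :=
  fun _ _ hIJ => ⟨TD_mono D hIJ, UA_mono D hIJ⟩

end Monotonicity

lemma IsWFModel.le_of_map_le {L : Type*} {W : Interp L → Interp L} (hW : Monotone W)
    {I J : Interp L} (hI : IsWFModel W I) (hJ : W J ≤ J) : I ≤ J := by
  let f : Interp L →o Interp L := ⟨W, hW⟩
  have hI_le_lfp := hI.2 (OrderHom.lfp f) f.map_lfp
  exact le_trans ⟨hI_le_lfp.1, hI_le_lfp.2⟩ (OrderHom.lfp_le f hJ)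

lemma alphaReduct_subset_rules (D : DTheory A) (M : Set (Lit A)) :
    alphaReduct D M ⊆ D.rules := by
  rintro r (hr | hr)
  exacts [hr.1, hr.1.1]

section AlphaStable

variable {D : DTheory A} {M : Set (Lit A)}

lemma AlphaStable.head_mem (hM : AlphaStable D M) (hfin : ∀ r ∈ D.rules, r.body.Finite)
    {r : DRule A} (hr : r ∈ alphaReduct D M) (hbody : r.body ⊆ M) : r.head ∈ M := by
  rw [← hM] at hbody ⊢
  exact head_mem_ClR hr (hfin r (alphaReduct_subset_rules D M hr)) hbody

/-- A defeasible witness of provability wrt `(M, Mᶜ)` survives the α-reduct: each literal `q`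
it relies on being blocked has no rule with body in `M`, so `q ∉ Cl(D_α^M) = M`. -/
lemma AlphaStable.TD_subset (hM : AlphaStable D M) (hfin : ∀ r ∈ D.rules, r.body.Finite)
    (hprec : ∀ r s, ¬ D.prec r s) : TD D (M, Mᶜ) ⊆ M := by
  rintro _ ⟨r, hr, rfl, hbody, hkind⟩
  refine hM.head_mem hfin ?_ hbody
  rcases hkind with hstrict | ⟨hdef, hdefeat⟩
  · exact Or.inl ⟨hr, hstrict⟩
  refine Or.inr ⟨⟨hr, hdef⟩, fun c hc hpc => ?_⟩
  obtain ⟨q, hq, hblocked⟩ := hdefeat c hc hpc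
  refine ⟨q, hq, fun hqM => ?_⟩
  rw [← hM] at hqM
  obtain ⟨s, hs, hshead, hsbody⟩ := exists_rule_of_mem_ClR hqM
  rcases hblocked s (alphaReduct_subset_rules D M hs) hshead with hsr | ⟨x, hxs, hxM⟩
  · exact hprec s r hsr
  · exact hxM (hM ▸ hsbody hxs)

/-- A rule of `D_α^M` with body in `M` and head in an unfounded set `S` must have a premise in
`S`: the alternative, a conflict set whose other members all have strict rules with bodies
in `M`, would lie in `M` apart from the head, and then the rule is not in the reduct. -/
lemma AlphaStable.UA_subset (hM : AlphaStable D M) (hfin : ∀ r ∈ D.rules, r.body.Finite)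
    (hprec : ∀ r s, ¬ D.prec r s) : UA D (M, Mᶜ) ⊆ Mᶜ := by
  rintro p ⟨S, hS, hpS⟩ hpM
  have hdisj : Disjoint M S := by
    rw [← hM]
    refine disjoint_ClR fun r hr hhead hbody => ?_
    have hbodyM : r.body ⊆ M := hM ▸ hbody
    have hviaS : (r.body ∩ (Mᶜ ∪ S)).Nonempty → (r.body ∩ S).Nonempty :=
      fun ⟨x, hxr, hx⟩ => ⟨x, hxr, hx.resolve_left (not_not_intro (hbodyM hxr))⟩
    obtain ⟨hstrict, hdef⟩ := hS r.head hhead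
    rcases hr with hrs | ⟨hrd, hsurvives⟩
    · exact hviaS (hstrict r hrs rfl)
    rcases hdef r hrd rfl with hne | ⟨c, hc, hpc, hattack⟩
    · exact hviaS hne
    obtain ⟨q, hq, hqM⟩ := hsurvives c hc hpc
    obtain ⟨s, hs, rfl, hsbody, hstronger⟩ := hattack q hq
    exact absurd (hM.head_mem hfin (Or.inl ⟨hs, hstronger.resolve_left (hprec r s)⟩) hsbody) hqM
  exact Set.disjoint_left.mp hdisj hpM hpS

end AlphaStable

end Development

theorem adl_wfm_within_alpha_stable_general {A : Type*} (D : DTheory A)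
    (hwf : D.WellFormed)
    (hprec : ∀ r s, ¬ D.prec r s)
    (I : Interp (Lit A)) (hI : IsWFModel (WA D) I) :
    ∀ M : Set (Lit A), AlphaStable D M → I.1 ⊆ M ∧ I.2 ∩ alphaOp D M = ∅ := by
  intro M hM
  have hfin : ∀ r ∈ D.rules, r.body.Finite := hwf.2.2.1
  have hle : I ≤ (M, Mᶜ) :=
    hI.le_of_map_le (WA_mono D) ⟨hM.TD_subset hfin hprec, hM.UA_subset hfin hprec⟩
  refine ⟨hle.1, ?_⟩
  rw [hM]
  exact (Set.subset_compl_iff_disjoint_right.mp hle.2).inter_eq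

/-- Let `D = ⟨R, C, ∅⟩` be a defeasible theory with `≺ = ∅` and `R_u = ∅`, and let
`⟨T, F⟩` be its well-founded model under ADL. For every `α`-stable set `M` of `D`:
`T ⊆ M` and `F ∩ α_D(M) = ∅`. -/
theorem adl_wfm_within_alpha_stable {A : Type*} (D : DTheory A)
    (hwf : D.WellFormed)
    (hprec : ∀ r s, ¬ D.prec r s)
    (hru : D.Ru = ∅)
    (I : Interp (Lit A)) (hI : IsWFModel (WA D) I) :
    ∀ M : Set (Lit A), AlphaStable D M → I.1 ⊆ M ∧ I.2 ∩ alphaOp D M = ∅ :=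
  adl_wfm_within_alpha_stable_general D hwf hprec I hI

end DLWFS
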